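/- arXiv:2406.09210 — 8 statements merged into one kernel-verified Lean document; each statement's English description precedes it below -/
import Mathlib

section
/- Let G be a finite abelian group. Then d(G) = e(G) = f(G), where d(G) is the Davenport constant (smallest m such that every sequence of length m over G has a nonempty zero-sum subsequence), e(G) is the smallest m such that every zero-sum sequence over G contains a nonempty zero-sum subsequence of length at most m, and f(G) is the smallest m such that every sequence of length d(G) contains a nonempty zero-sum subsequence of length at most m. -/
/-- The additive Davenport constant `d(G)`: the smallest `m` such that every sequence of
length `m` over `G` has a nonempty zero-sum subsequence. -/
noncomputable def dA (G : Type*) [AddCommGroup G] : ℕ :=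
  sInf {m | 0 < m ∧ ∀ S : List G, S.length = m →
    ∃ T : List G, T ≠ [] ∧ T.Sublist S ∧ T.sum = 0}

/-- `e(G)`: the smallest `m` such that every nonempty zero-sum sequence over `G`
contains a nonempty zero-sum subsequence of length at most `m`. -/
noncomputable def eA (G : Type*) [AddCommGroup G] : ℕ :=
  sInf {m | 0 < m ∧ ∀ S : List G, S ≠ [] → S.sum = 0 →
    ∃ T : List G, T ≠ [] ∧ T.Sublist S ∧ T.length ≤ m ∧ T.sum = 0}

/-- `f(G)`: the smallest `m` such that every sequence of length `d(G)` over `G`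
contains a nonempty zero-sum subsequence of length at most `m`. -/
noncomputable def fA (G : Type*) [AddCommGroup G] : ℕ :=
  sInf {m | 0 < m ∧ ∀ S : List G, S.length = dA G →
    ∃ T : List G, T ≠ [] ∧ T.Sublist S ∧ T.length ≤ m ∧ T.sum = 0}

/-!
Pigeonhole on the `|G| + 1` prefix sums of a sequence of length `|G|` shows that `d(G)` is
well defined. Trivially `f(G) ≤ e(G) ≤ d(G)`: a sequence of length `d(G)` has a zero-sum
subsequence, which in turn has one of length at most `e(G)`. Conversely, if `S` is zero-sum
free of length `d(G) - 1`, then the only nonempty zero-sum subsequence of `S · (-σ(S))` is the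
whole sequence, of length `d(G)`; hence `d(G) ≤ f(G)`.
-/

namespace List

theorem Sublist.exists_compl {M : Type*} [AddCommMonoid M] {T S : List M} (h : T <+ S) :
    ∃ U, U <+ S ∧ T.sum + U.sum = S.sum ∧ T.length + U.length = S.length := by
  induction h with
  | slnil => exact ⟨[], .refl _, by simp, by simp⟩
  | cons a _ ih =>
    obtain ⟨U, hU, hsum, hlen⟩ := ih
    refine ⟨a :: U, hU.cons_cons a, ?_, ?_⟩
    · rw [sum_cons, sum_cons, ← hsum, add_left_comm]
    · simp only [length_cons]; omega
  | cons_cons a _ ih =>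
    obtain ⟨U, hU, hsum, hlen⟩ := ih
    refine ⟨U, hU.cons a, ?_, ?_⟩
    · rw [sum_cons, sum_cons, ← hsum, add_assoc]
    · simp only [length_cons]; omega

def ZeroSumFree {M : Type*} [AddMonoid M] (S : List M) : Prop :=
  ∀ T, T ≠ [] → T <+ S → T.sum ≠ 0

theorem exists_zero_sum_sublist_of_sum_take_eq {M : Type*} [AddLeftCancelMonoid M]
    {S : List M} {i j : ℕ} (hij : i < j) (hj : j ≤ S.length)
    (h : (S.take i).sum = (S.take j).sum) : ∃ T, T ≠ [] ∧ T <+ S ∧ T.sum = 0 := by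
  refine ⟨(S.take j).drop i, ?_, (drop_sublist _ _).trans (take_sublist _ _), ?_⟩
  · rw [← length_pos_iff, length_drop, length_take]
    omega
  · have hsplit := sum_take_add_sum_drop (S.take j) i
    rwa [take_take, min_eq_left hij.le, ← h, add_eq_left] at hsplit

theorem exists_zero_sum_sublist_of_card_le_length {M : Type*} [AddLeftCancelMonoid M]
    [Finite M] {S : List M} (hS : Nat.card M ≤ S.length) :
    ∃ T, T ≠ [] ∧ T <+ S ∧ T.sum = 0 := by
  have := Fintype.ofFinite M
  have hcard : Fintype.card M < Fintype.card (Fin (Nat.card M + 1)) := by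
    simp [Nat.card_eq_fintype_card]
  obtain ⟨i, j, hij, hsum⟩ :=
    Fintype.exists_ne_map_eq_of_card_lt (fun i : Fin (Nat.card M + 1) ↦ (S.take i).sum) hcard
  rcases lt_or_gt_of_ne (Fin.val_injective.ne hij) with hlt | hlt
  · exact exists_zero_sum_sublist_of_sum_take_eq hlt (by omega) hsum
  · exact exists_zero_sum_sublist_of_sum_take_eq hlt (by omega) hsum.symm

theorem ZeroSumFree.length_eq_of_sublist_append_neg_sum {G : Type*} [AddCommGroup G]
    {S T : List G} (hS : S.ZeroSumFree) (hT : T <+ S ++ [-S.sum]) (hne : T ≠ [])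
    (hsum : T.sum = 0) : T.length = S.length + 1 := by
  obtain ⟨T₁, T₂, rfl, hT₁, hT₂⟩ := sublist_append_iff.mp hT
  rcases sublist_singleton.mp hT₂ with rfl | rfl
  · rw [append_nil] at hne hsum
    exact absurd hsum (hS T₁ hne hT₁)
  · obtain ⟨U, hU, hUsum, hUlen⟩ := hT₁.exists_compl
    have hT₁sum : T₁.sum = S.sum := by
      simpa [add_neg_eq_zero] using hsum
    have hUnil : U = [] := by
      by_contra hUne
      exact hS U hUne hU (by rwa [hT₁sum, add_eq_left] at hUsum)
    simp only [hUnil, length_nil, add_zero] at hUlen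
    simp [hUlen]

end List

section DavenportConstants

variable (G : Type*) [AddCommGroup G]

theorem dA_spec [Finite G] :
    0 < dA G ∧ ∀ S : List G, S.length = dA G → ∃ T, T ≠ [] ∧ T.Sublist S ∧ T.sum = 0 := by
  have hne : ∃ m, 0 < m ∧ ∀ S : List G, S.length = m → ∃ T, T ≠ [] ∧ T.Sublist S ∧ T.sum = 0 :=
    ⟨Nat.card G, Nat.card_pos, fun _ hS ↦ List.exists_zero_sum_sublist_of_card_le_length hS.ge⟩
  exact Nat.sInf_mem hne

theorem exists_zeroSumFree_of_lt_dA {m : ℕ} (hm : m < dA G) :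
    ∃ S : List G, S.length = m ∧ S.ZeroSumFree := by
  rcases Nat.eq_zero_or_pos m with rfl | hpos
  · exact ⟨[], rfl, fun T hne hT ↦ absurd (List.sublist_nil.mp hT) hne⟩
  · have hnot := Nat.notMem_of_lt_sInf hm
    simp only [Set.mem_ofPred_eq, hpos, true_and, not_forall] at hnot
    obtain ⟨S, hlen, hfree⟩ := hnot
    exact ⟨S, hlen, fun T hne hT h0 ↦ hfree ⟨T, hne, hT, h0⟩⟩

theorem exists_zero_sum_sublist_length_le_dA [Finite G] {S : List G} (hne : S ≠ [])
    (hsum : S.sum = 0) : ∃ T, T ≠ [] ∧ T.Sublist S ∧ T.length ≤ dA G ∧ T.sum = 0 := by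
  rcases le_or_gt S.length (dA G) with hle | hlt
  · exact ⟨S, hne, .refl S, hle, hsum⟩
  · have hlen : (S.take (dA G)).length = dA G := by simp [hlt.le]
    obtain ⟨T, hTne, hT, hTsum⟩ := (dA_spec G).2 _ hlen
    exact ⟨T, hTne, hT.trans (S.take_sublist _), hlen ▸ hT.length_le, hTsum⟩

theorem eA_le_dA [Finite G] : eA G ≤ dA G :=
  Nat.sInf_le ⟨(dA_spec G).1, fun _ ↦ exists_zero_sum_sublist_length_le_dA G⟩

theorem eA_spec [Finite G] :
    0 < eA G ∧ ∀ S : List G, S ≠ [] → S.sum = 0 →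
      ∃ T, T ≠ [] ∧ T.Sublist S ∧ T.length ≤ eA G ∧ T.sum = 0 := by
  have hne : ∃ m, 0 < m ∧ ∀ S : List G, S ≠ [] → S.sum = 0 →
      ∃ T, T ≠ [] ∧ T.Sublist S ∧ T.length ≤ m ∧ T.sum = 0 :=
    ⟨dA G, (dA_spec G).1, fun _ ↦ exists_zero_sum_sublist_length_le_dA G⟩
  exact Nat.sInf_mem hne

theorem exists_zero_sum_sublist_length_le_eA [Finite G] {S : List G} (hS : S.length = dA G) :
    ∃ T, T ≠ [] ∧ T.Sublist S ∧ T.length ≤ eA G ∧ T.sum = 0 := by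
  obtain ⟨T, hTne, hT, hTsum⟩ := (dA_spec G).2 S hS
  obtain ⟨T', hT'ne, hT', hT'len, hT'sum⟩ := (eA_spec G).2 T hTne hTsum
  exact ⟨T', hT'ne, hT'.trans hT, hT'len, hT'sum⟩

theorem fA_le_eA [Finite G] : fA G ≤ eA G :=
  Nat.sInf_le ⟨(eA_spec G).1, fun _ ↦ exists_zero_sum_sublist_length_le_eA G⟩

theorem dA_le_of_forall_exists_zero_sum_sublist_length_le {m : ℕ}
    (h : ∀ S : List G, S.length = dA G → ∃ T, T ≠ [] ∧ T.Sublist S ∧ T.length ≤ m ∧ T.sum = 0) :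
    dA G ≤ m := by
  by_contra! hlt
  obtain ⟨S, hSlen, hS⟩ := exists_zeroSumFree_of_lt_dA G (show dA G - 1 < dA G by omega)
  obtain ⟨T, hne, hT, hTlen, hTsum⟩ := h (S ++ [-S.sum]) (by simp [hSlen]; omega)
  have := hS.length_eq_of_sublist_append_neg_sum hT hne hTsum
  omega

theorem fA_spec [Finite G] :
    0 < fA G ∧ ∀ S : List G, S.length = dA G →
      ∃ T, T ≠ [] ∧ T.Sublist S ∧ T.length ≤ fA G ∧ T.sum = 0 := by
  have hne : ∃ m, 0 < m ∧ ∀ S : List G, S.length = dA G →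
      ∃ T, T ≠ [] ∧ T.Sublist S ∧ T.length ≤ m ∧ T.sum = 0 :=
    ⟨eA G, (eA_spec G).1, fun _ ↦ exists_zero_sum_sublist_length_le_eA G⟩
  exact Nat.sInf_mem hne

theorem dA_le_fA [Finite G] : dA G ≤ fA G :=
  dA_le_of_forall_exists_zero_sum_sublist_length_le G (fA_spec G).2

end DavenportConstants

/-- For a finite abelian group, `d(G) = e(G) = f(G)`. -/
theorem abelian_d_eq_e_eq_f (G : Type*) [AddCommGroup G] [Finite G] :
    dA G = eA G ∧ eA G = fA G := by
  have := eA_le_dA G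
  have := fA_le_eA G
  have := dA_le_fA G
  omega
end

section
/- For any positive integer n >= 3, the dihedral group D_{2n} satisfies f(D_{2n}) = e(D_{2n}) = n, where d(D_{2n}) = n + 1. -/
/-!
Write a sequence over `D_{2n}` as reflections `sr a` and rotations `r b`, and let `sᵢ` be the
prefix sums of the rotation exponents. If there are at least `n` rotations, two of `s₀, …, sₙ`
coincide and give a zero-sum block of at most `n` rotations. A repeated reflection gives
`sr a * sr a = 1`. Otherwise `k ≥ 2` distinct reflections `sr a₀, …, sr a_{k-1}` meet
`n + 1 - k` rotations, and the `n + 2 - k` prefix sums together with the `k - 1` values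
`s₁ + (aₗ - a₀)` are `n + 1` elements of `ZMod n`. A collision yields a zero-sum block or a block
of sum `±(aₗ - a₀)` of length at most `n - 2`, which `sr a₀` and `sr aₗ` close up, because
`sr b * r s * sr a = r (a - b - s)`.

For the lower bounds, the sign character `D_{2n} → ℤˣ` shows that no product-one subsequence of
`r 1 ^ j · sr 0` contains `sr 0`, so they are the `r 1 ^ i` with `n ∣ i`.
-/

open List Subgroup

/-- The set of all products of the terms of `S` in all orders. -/
def PiSet {G : Type*} [Group G] (S : List G) : Set G :=
  {g | ∃ l : List G, l.Perm S ∧ l.prod = g}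

/-- `S` is a product-one sequence if `1 ∈ Π(S)`. -/
def IsProdOne {G : Type*} [Group G] (S : List G) : Prop :=
  (1 : G) ∈ PiSet S

/-- The Davenport constant `d(G)`: the smallest `m` such that every sequence of
length `m` over `G` contains a nonempty product-one subsequence. -/
noncomputable def dC (G : Type*) [Group G] : ℕ :=
  sInf {m | 0 < m ∧ ∀ S : List G, S.length = m →
    ∃ T : List G, T ≠ [] ∧ T.Sublist S ∧ IsProdOne T}

/-- `e(G)`: the smallest `m` such that every nonempty product-one sequence over `G`
contains a nonempty product-one subsequence of length at most `m`. -/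
noncomputable def eC (G : Type*) [Group G] : ℕ :=
  sInf {m | 0 < m ∧ ∀ S : List G, S ≠ [] → IsProdOne S →
    ∃ T : List G, T ≠ [] ∧ T.Sublist S ∧ T.length ≤ m ∧ IsProdOne T}

/-- `f(G)`: the smallest `m` such that every sequence of length `d(G)` over `G`
contains a nonempty product-one subsequence of length at most `m`. -/
noncomputable def fC (G : Type*) [Group G] : ℕ :=
  sInf {m | 0 < m ∧ ∀ S : List G, S.length = dC G →
    ∃ T : List G, T ≠ [] ∧ T.Sublist S ∧ T.length ≤ m ∧ IsProdOne T}

/-- The `k`-th Davenport constant `d_k(G)`: the smallest `m` such that every sequence of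
length `m` over `G` contains `k` pairwise disjoint nonempty product-one subsequences. -/
noncomputable def dkC (G : Type*) [Group G] (k : ℕ) : ℕ :=
  sInf {m | 0 < m ∧ ∀ S : List G, S.length = m →
    ∃ Ts : List (List G), Ts.length = k ∧ (∀ T ∈ Ts, T ≠ [] ∧ IsProdOne T) ∧
      (Ts.flatten : Multiset G) ≤ (S : Multiset G)}

section PrefixSums

variable {M : Type*} [AddCommGroup M]

theorem List.exists_infix_sum_eq_sub (B : List M) {i j : ℕ} (hij : i ≤ j) (hj : j ≤ B.length) :
    ∃ L, L <:+: B ∧ L.length = j - i ∧ L.sum = (B.take j).sum - (B.take i).sum := by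
  refine ⟨(B.take j).drop i, (drop_suffix _ _).isInfix.trans (take_prefix _ _).isInfix,
    by simp; omega, ?_⟩
  have hsplit := congrArg sum (take_append_drop i (B.take j))
  rw [take_take, Nat.min_eq_left hij, sum_append] at hsplit
  rw [← hsplit]
  abel

theorem List.exists_infix_sum_eq_zero_of_not_injOn {B : List M}
    (h : ¬ Set.InjOn (fun i => (B.take i).sum) (Finset.range (B.length + 1))) :
    ∃ L, L ≠ [] ∧ L <:+: B ∧ L.sum = 0 := by
  have key : ∀ i j, i < j → j ≤ B.length → (B.take i).sum = (B.take j).sum →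
      ∃ L, L ≠ [] ∧ L <:+: B ∧ L.sum = 0 := by
    intro i j hij hj hsum
    obtain ⟨L, hL, hlen, hLsum⟩ := B.exists_infix_sum_eq_sub hij.le hj
    exact ⟨L, ne_nil_of_length_pos (by omega), hL, by rw [hLsum, hsum, sub_self]⟩
  simp only [Set.InjOn, Finset.coe_range, Set.mem_Iio, not_forall] at h
  obtain ⟨i, hi, j, hj, hsum, hne⟩ := h
  rcases Nat.lt_or_gt_of_ne hne with hij | hji
  · exact key i j hij (by omega) hsum
  · exact key j i hji (by omega) hsum.symm

theorem List.exists_infix_sum_eq_zero_of_card_le [Fintype M] {B : List M}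
    (h : Fintype.card M ≤ B.length) :
    ∃ L, L ≠ [] ∧ L <:+: B ∧ L.length ≤ Fintype.card M ∧ L.sum = 0 := by
  obtain ⟨L, hne, hL, hsum⟩ :=
    exists_infix_sum_eq_zero_of_not_injOn (B := B.take (Fintype.card M)) fun hinj => by
      have := Finset.card_le_card_of_injOn _ (fun _ _ => Finset.mem_univ _) hinj
      simp at this
      omega
  exact ⟨L, hne, hL.trans (take_prefix _ _).isInfix, hL.length_le.trans (by simp), hsum⟩

-- Pigeonhole between the prefix sums `sᵢ` of `B` and the translates `s₁ + d`, `d ∈ D`.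
theorem List.exists_infix_sum_eq_or_eq_neg [Fintype M] [DecidableEq M] {B : List M}
    {D : Finset M} (hD : 0 ∉ D)
    (hinj : Set.InjOn (fun i => (B.take i).sum) (Finset.range (B.length + 1)))
    (hcard : Fintype.card M < B.length + 1 + D.card) :
    ∃ d ∈ D, ∃ L, L <:+: B ∧ (L.length ≤ 1 ∨ L.length < B.length) ∧
      (L.sum = d ∨ L.sum = -d) := by
  have hB : 1 ≤ B.length := by
    have := Finset.card_lt_univ_of_notMem hD
    omega
  obtain ⟨x, hx⟩ := Finset.inter_nonempty_of_card_lt_card_add_card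
    (Finset.subset_univ ((Finset.range (B.length + 1)).image fun i => (B.take i).sum))
    (Finset.subset_univ (D.image ((B.take 1).sum + ·)))
    (by rwa [Finset.card_univ, Finset.card_image_of_injOn hinj,
      Finset.card_image_of_injective _ (add_right_injective _), Finset.card_range])
  simp only [Finset.mem_inter, Finset.mem_image, Finset.mem_range] at hx
  obtain ⟨⟨i, hi, rfl⟩, d, hd, hsd⟩ := hx
  refine ⟨d, hd, ?_⟩
  rcases Nat.lt_trichotomy i 1 with hi0 | rfl | hi1
  · obtain rfl : i = 0 := by omega
    obtain ⟨L, hL, hlen, hsum⟩ := B.exists_infix_sum_eq_sub (Nat.zero_le 1) hB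
    simp only [take_zero, sum_nil, sub_zero] at hsum hsd
    exact ⟨L, hL, Or.inl (by omega), Or.inr (hsum ▸ eq_neg_of_add_eq_zero_left hsd)⟩
  · exact absurd (add_eq_left.1 hsd ▸ hd) hD
  · obtain ⟨L, hL, hlen, hsum⟩ := B.exists_infix_sum_eq_sub hi1.le (by omega)
    exact ⟨L, hL, Or.inr (by omega), Or.inl (by rw [hsum, ← hsd]; abel)⟩

end PrefixSums

section ProdOne

variable {G : Type*} [Group G]

theorem IsProdOne.of_prod_eq_one {S : List G} (h : S.prod = 1) : IsProdOne S :=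
  ⟨S, Perm.refl S, h⟩

theorem IsProdOne.perm {S S' : List G} (h : IsProdOne S) (hp : S ~ S') : IsProdOne S' :=
  let ⟨l, hl, hl1⟩ := h
  ⟨l, hl.trans hp, hl1⟩

def HasShortProdOneSubseq (S : List G) (m : ℕ) : Prop :=
  ∃ T : List G, T ≠ [] ∧ T.Sublist S ∧ T.length ≤ m ∧ IsProdOne T

theorem HasShortProdOneSubseq.of_subperm {S T : List G} {m : ℕ} (hT : T ≠ [])
    (hTS : T.Subperm S) (hlen : T.length ≤ m) (h1 : IsProdOne T) :
    HasShortProdOneSubseq S m := by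
  obtain ⟨T', hT', hT'S⟩ := hTS
  exact ⟨T', fun h => hT (Perm.nil_eq (h ▸ hT')).symm, hT'S, hT'.length_eq ▸ hlen,
    h1.perm hT'.symm⟩

theorem HasShortProdOneSubseq.perm {S S' : List G} {m : ℕ} (h : HasShortProdOneSubseq S m)
    (hp : S ~ S') : HasShortProdOneSubseq S' m :=
  let ⟨_, hT, hTS, hlen, h1⟩ := h
  .of_subperm hT (hTS.subperm.trans hp.subperm) hlen h1

end ProdOne

namespace DihedralGroup

variable {n : ℕ}

theorem prod_map_r (L : List (ZMod n)) : (L.map r).prod = r L.sum := by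
  induction L with
  | nil => rfl
  | cons a L ih => simp [ih, r_mul_r]

def sign : DihedralGroup n →* ℤˣ where
  toFun
    | r _ => 1
    | sr _ => -1
  map_one' := rfl
  map_mul' := by rintro (a | a) (b | b) <;> simp [r_mul_r, r_mul_sr, sr_mul_r, sr_mul_sr]

@[simp] theorem sign_r (i : ZMod n) : sign (r i) = 1 := rfl

@[simp] theorem sign_sr (i : ZMod n) : sign (sr i) = -1 := rfl

theorem exists_perm_map_sr_append_map_r (S : List (DihedralGroup n)) :
    ∃ A B : List (ZMod n), S ~ A.map sr ++ B.map r := by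
  induction S with
  | nil => exact ⟨[], [], Perm.refl _⟩
  | cons x S ih =>
    obtain ⟨A, B, h⟩ := ih
    cases x with
    | r i => exact ⟨A, i :: B, (h.cons _).trans perm_middle.symm⟩
    | sr i => exact ⟨i :: A, B, h.cons _⟩

section Upper

variable {A B L : List (ZMod n)} {m : ℕ}

theorem hasShortProdOneSubseq_of_infix_sum_eq_zero (hne : L ≠ []) (hL : L <:+: B)
    (hsum : L.sum = 0) (hlen : L.length ≤ m) :
    HasShortProdOneSubseq (A.map sr ++ B.map r) m :=
  .of_subperm (by simpa using hne)
    ((hL.sublist.map r).trans (sublist_append_right _ _)).subperm (by simpa using hlen)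
    (.of_prod_eq_one (by rw [prod_map_r, hsum, r_zero]))

theorem hasShortProdOneSubseq_of_not_nodup (hA : ¬ A.Nodup) (hm : 2 ≤ m) :
    HasShortProdOneSubseq (A.map sr ++ B.map r) m := by
  obtain ⟨a, ha⟩ : ∃ a, [a, a] <+ A := by simpa [nodup_iff_sublist] using hA
  exact .of_subperm (by simp) ((ha.map sr).trans (sublist_append_left _ _)).subperm
    (by simpa using hm) (.of_prod_eq_one (by simp))

theorem prod_sr_map_r_sr (a b : ZMod n) (L : List (ZMod n)) :
    (sr b :: (L.map r ++ [sr a])).prod = r (a - b - L.sum) := by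
  simp [prod_map_r, sr_mul_sr, sub_sub, add_comm]

theorem isProdOne_sr_sr_map_r {a b : ZMod n} (hsum : L.sum = a - b ∨ L.sum = -(a - b)) :
    IsProdOne (sr b :: sr a :: L.map r) := by
  rcases hsum with hsum | hsum
  · refine (IsProdOne.of_prod_eq_one (S := sr b :: (L.map r ++ [sr a])) ?_).perm
      ((perm_append_singleton _ _).cons _)
    rw [prod_sr_map_r_sr, hsum, sub_self, r_zero]
  · refine (IsProdOne.of_prod_eq_one (S := sr a :: (L.map r ++ [sr b])) ?_).perm
      (((perm_append_singleton _ _).cons _).trans (.swap _ _ _))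
    rw [prod_sr_map_r_sr, hsum, neg_sub, sub_self, r_zero]

theorem hasShortProdOneSubseq_of_sublist_pair {a b : ZMod n} (hab : [b, a] <+ A)
    (hL : L <:+: B) (hsum : L.sum = a - b ∨ L.sum = -(a - b)) (hlen : L.length + 2 ≤ m) :
    HasShortProdOneSubseq (A.map sr ++ B.map r) m :=
  .of_subperm (by simp) (by simpa using ((hab.map sr).append (hL.sublist.map r)).subperm)
    (by simp; omega) (isProdOne_sr_sr_map_r hsum)

theorem hasShortProdOneSubseq_of_nodup [NeZero n] (hn : 3 ≤ n) (hA : A.Nodup)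
    (hB : B.length < n) (hlen : n < A.length + B.length)
    (hinj : Set.InjOn (fun i => (B.take i).sum) (Finset.range (B.length + 1))) :
    HasShortProdOneSubseq (A.map sr ++ B.map r) n := by
  classical
  obtain _ | ⟨a₀, A⟩ := A
  · simp at hlen; omega
  obtain ⟨ha₀, hA⟩ := nodup_cons.1 hA
  obtain ⟨d, hd, L, hL, hlenL, hsum⟩ := exists_infix_sum_eq_or_eq_neg
    (D := (A.map (· - a₀)).toFinset) (by simpa [sub_eq_zero] using ha₀) hinj
    (by rw [ZMod.card, toFinset_card_of_nodup (hA.map (sub_left_injective))]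
        simp at hlen ⊢; omega)
  obtain ⟨a, ha, rfl⟩ : ∃ a ∈ A, a - a₀ = d := by simpa using hd
  exact hasShortProdOneSubseq_of_sublist_pair (cons_sublist_cons.2 (singleton_sublist.2 ha))
    hL hsum (by simp at hlen; omega)

theorem hasShortProdOneSubseq_of_lt_length [NeZero n] (hn : 3 ≤ n) {S : List (DihedralGroup n)}
    (hS : n < S.length) : HasShortProdOneSubseq S n := by
  obtain ⟨A, B, hAB⟩ := exists_perm_map_sr_append_map_r S
  have hlen : A.length + B.length = S.length := by simpa using hAB.length_eq.symm
  refine HasShortProdOneSubseq.perm ?_ hAB.symm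
  by_cases hB : n ≤ B.length
  · obtain ⟨L, hne, hL, hlenL, hsum⟩ :=
      exists_infix_sum_eq_zero_of_card_le (B := B) (by rwa [ZMod.card])
    exact hasShortProdOneSubseq_of_infix_sum_eq_zero hne hL hsum (by rwa [ZMod.card] at hlenL)
  by_cases hA : A.Nodup
  swap
  · exact hasShortProdOneSubseq_of_not_nodup hA (by omega)
  by_cases hinj : Set.InjOn (fun i => (B.take i).sum) (Finset.range (B.length + 1))
  · exact hasShortProdOneSubseq_of_nodup hn hA (by omega) (by omega) hinj
  obtain ⟨L, hne, hL, hsum⟩ := exists_infix_sum_eq_zero_of_not_injOn hinj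
  exact hasShortProdOneSubseq_of_infix_sum_eq_zero hne hL hsum (by have := hL.length_le; omega)

end Upper

theorem prod_ne_one_of_perm_replicate_append_sr {i : ℕ} {l : List (DihedralGroup n)}
    (hl : l ~ replicate i (r 1) ++ [sr 0]) : l.prod ≠ 1 := by
  intro h1
  have := congrArg sign h1
  rw [MonoidHom.map_list_prod, (hl.map sign).prod_eq] at this
  simp at this

theorem le_length_of_isProdOne_of_sublist {j : ℕ} {T : List (DihedralGroup n)}
    (hT : T <+ replicate j (r 1) ++ [sr 0]) (hne : T ≠ []) (h1 : IsProdOne T) :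
    n ≤ T.length ∧ T.length ≤ j := by
  obtain ⟨T₁, T₂, rfl, h₁, h₂⟩ := sublist_append_iff.1 hT
  obtain ⟨i, hij, rfl⟩ := sublist_replicate_iff.1 h₁
  obtain ⟨l, hl, hl1⟩ := h1
  rcases sublist_singleton.1 h₂ with rfl | rfl
  · rw [append_nil, perm_replicate] at hl
    subst hl
    rw [prod_replicate, r_one_pow, one_def, r.injEq, ZMod.natCast_eq_zero_iff] at hl1
    simp only [append_nil, ne_eq, replicate_eq_nil_iff, length_replicate] at hne ⊢
    exact ⟨Nat.le_of_dvd (Nat.pos_of_ne_zero hne) hl1, hij⟩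
  · exact absurd hl1 (prod_ne_one_of_perm_replicate_append_sr hl)

section Constants

variable [NeZero n]

theorem dC_eq (hn : 3 ≤ n) : dC (DihedralGroup n) = n + 1 := by
  refine IsLeast.csInf_eq ⟨⟨n.succ_pos, fun S hS => ?_⟩, fun m ⟨hm0, hm⟩ => ?_⟩
  · obtain ⟨T, hne, hT, -, h1⟩ := hasShortProdOneSubseq_of_lt_length hn (S := S) (by omega)
    exact ⟨T, hne, hT, h1⟩
  · by_contra! hmn
    obtain ⟨T, hne, hT, h1⟩ := hm (replicate (m - 1) (r 1) ++ [sr 0]) (by simp; omega)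
    have := le_length_of_isProdOne_of_sublist hT hne h1
    omega

theorem eC_eq (hn : 3 ≤ n) : eC (DihedralGroup n) = n := by
  refine IsLeast.csInf_eq ⟨⟨by omega, fun S hne h1 => ?_⟩, fun m ⟨_, hm⟩ => ?_⟩
  · by_cases hS : S.length ≤ n
    · exact ⟨S, hne, Sublist.refl S, hS, h1⟩
    · exact hasShortProdOneSubseq_of_lt_length hn (not_le.1 hS)
  · have h1 : IsProdOne (replicate n (r 1 : DihedralGroup n)) :=
      .of_prod_eq_one (by rw [prod_replicate, r_one_pow_n])
    obtain ⟨T, hne, hT, hTm, hT1⟩ := hm _ (by simp [NeZero.ne n]) h1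
    have := le_length_of_isProdOne_of_sublist (hT.trans (sublist_append_left _ [sr 0])) hne hT1
    omega

theorem fC_eq (hn : 3 ≤ n) : fC (DihedralGroup n) = n := by
  refine IsLeast.csInf_eq ⟨⟨by omega, fun S hS => ?_⟩, fun m ⟨_, hm⟩ => ?_⟩
  · exact hasShortProdOneSubseq_of_lt_length hn (by rw [hS, dC_eq hn]; omega)
  · obtain ⟨T, hne, hT, hTm, hT1⟩ :=
      hm (replicate n (r 1) ++ [sr 0]) (by simp [dC_eq hn])
    have := le_length_of_isProdOne_of_sublist hT hne hT1
    omega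

end Constants

end DihedralGroup

/-- For `n ≥ 3`, `f(D_{2n}) = e(D_{2n}) = n`, where `d(D_{2n}) = n + 1`. -/
theorem dihedral_f_e (n : ℕ) (hn : 3 ≤ n) :
    fC (DihedralGroup n) = n ∧ eC (DihedralGroup n) = n ∧
      dC (DihedralGroup n) = n + 1 := by
  have : NeZero n := ⟨by omega⟩
  exact ⟨DihedralGroup.fC_eq hn, DihedralGroup.eC_eq hn, DihedralGroup.dC_eq hn⟩
end

section
/- Let G = <x, y | x^q = y^n = 1, x^g y = y x> with q prime and ord_q(g) = n. If h_1 = x^a y^b and h_2 = x^c y^d satisfy h_1 h_2 = x^k with k not divisible by q, then h_2 h_1 = x^{g^d k}. In particular, if h_1 h_2 = h_2 h_1 = x^k with q not dividing k, then both h_1 and h_2 lie in <x>. -/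
open List Subgroup

/-- In `G = Z_n ⋉ Z_q` (q prime, `ord_q(g) = n`): if `h₁ = x^a y^b`, `h₂ = x^c y^d` and
`h₁ h₂ = x^k` with `q ∤ k`, then `h₂ h₁ = x^{g^d k}`; in particular, if moreover
`h₁ h₂ = h₂ h₁`, then `h₁, h₂ ∈ ⟨x⟩`. -/
theorem bass_commutator_lemma (q n g : ℕ) (hq : q.Prime) (hg : orderOf (g : ZMod q) = n)
    (G : Type*) [Group G] [Finite G] (x y : G)
    (hordx : orderOf x = q) (hordy : orderOf y = n)
    (hrel : x ^ g * y = y * x)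
    (hgen : Subgroup.closure ({x, y} : Set G) = ⊤)
    (a b c d k : ℕ) (hk : ¬ q ∣ k)
    (h12 : (x ^ a * y ^ b) * (x ^ c * y ^ d) = x ^ k) :
    (x ^ c * y ^ d) * (x ^ a * y ^ b) = x ^ (g ^ d * k) ∧
      ((x ^ c * y ^ d) * (x ^ a * y ^ b) = x ^ k →
        x ^ a * y ^ b ∈ Subgroup.zpowers x ∧ x ^ c * y ^ d ∈ Subgroup.zpowers x) := by
  haveI : Fact q.Prime := ⟨hq⟩
  have hγn : (g : ZMod q) ^ n = 1 := by rw [← hg]; exact pow_orderOf_eq_one _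
  have hc1 : y * x * y⁻¹ = x ^ g := by rw [← hrel]; group
  have hcb : ∀ b : ℕ, y ^ b * x * (y ^ b)⁻¹ = x ^ (g ^ b) := by
    intro b
    induction b with
    | zero => simp
    | succ b ih =>
      have h : y ^ (b+1) * x * (y ^ (b+1))⁻¹ = y * (y ^ b * x * (y ^ b)⁻¹) * y⁻¹ := by group
      rw [h, ih, ← conj_pow, hc1, ← pow_mul, pow_succ, Nat.mul_comm]
  have hswap : ∀ b m : ℕ, y ^ b * x ^ m = x ^ (g ^ b * m) * y ^ b := by
    intro b m
    have h2 : (y ^ b * x * (y ^ b)⁻¹) ^ m = x ^ (g ^ b * m) := by rw [hcb b, ← pow_mul]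
    rw [conj_pow] at h2
    calc y ^ b * x ^ m = (y ^ b * x ^ m * (y ^ b)⁻¹) * y ^ b := by group
    _ = x ^ (g ^ b * m) * y ^ b := by rw [h2]
  have hprod : ∀ a b c d : ℕ,
      (x ^ a * y ^ b) * (x ^ c * y ^ d) = x ^ (a + g ^ b * c) * y ^ (b + d) := by
    intro a b c d
    rw [pow_add x, pow_add y]
    calc x ^ a * y ^ b * (x ^ c * y ^ d) = x ^ a * (y ^ b * x ^ c) * y ^ d := by group
    _ = x ^ a * (x ^ (g ^ b * c) * y ^ b) * y ^ d := by rw [hswap]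
    _ = x ^ a * x ^ (g ^ b * c) * (y ^ b * y ^ d) := by group
  have hxz : ∀ m m' : ℤ, x ^ m = x ^ m' ↔ ((m : ZMod q) = (m' : ZMod q)) := by
    intro m m'
    rw [zpow_eq_zpow_iff_modEq, hordx, ZMod.intCast_eq_intCast_iff]
  have hyx : y ^ (b + d) = x ^ ((k : ℤ) - (a + g ^ b * c)) := by
    rw [hprod] at h12
    have h : y ^ (b + d) = (x ^ (a + g ^ b * c))⁻¹ * x ^ k := by rw [← h12]; group
    rw [h, ← zpow_natCast x (a + g ^ b * c), ← zpow_natCast x k, ← zpow_neg, ← zpow_add]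
    congr 1
    push_cast
    ring
  have hgs : x ^ ((g : ℤ) * ((k : ℤ) - (a + g ^ b * c))) = x ^ ((k : ℤ) - (a + g ^ b * c)) := by
    have h1 : y * x ^ ((k : ℤ) - (a + g ^ b * c)) * y⁻¹
        = x ^ ((g : ℤ) * ((k : ℤ) - (a + g ^ b * c))) := by
      rw [← conj_zpow, hc1, ← zpow_natCast x g, ← zpow_mul]
    have h2 : y * y ^ (b + d) * y⁻¹ = y ^ (b + d) := by group
    rw [hyx] at h2
    rw [← h1]
    exact h2
  rw [hxz] at hgs
  push_cast at hgs
  have hkey : ((g : ZMod q) - 1) * ((k : ZMod q) - (a + (g : ZMod q) ^ b * c)) = 0 := by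
    linear_combination hgs
  have main : (x ^ c * y ^ d) * (x ^ a * y ^ b) = x ^ (g ^ d * k) := by
    rw [hprod]
    have hdb : y ^ (d + b) = x ^ ((k : ℤ) - (a + g ^ b * c)) := by rw [Nat.add_comm d b, hyx]
    rw [hdb, ← zpow_natCast x (c + g ^ d * a), ← zpow_add, ← zpow_natCast x (g ^ d * k), hxz]
    push_cast
    rcases mul_eq_zero.mp hkey with h1 | h2
    · have hγ1 : (g : ZMod q) = 1 := by linear_combination h1
      rw [hγ1]
      ring
    · have hx1 : x ^ ((k : ℤ) - (a + g ^ b * c)) = 1 := by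
        have h : x ^ ((k : ℤ) - (a + g ^ b * c)) = x ^ (0 : ℤ) := by
          rw [hxz]; push_cast; linear_combination h2
        simpa using h
      have hy1 : y ^ (b + d) = 1 := by rw [hyx, hx1]
      have hn : n ∣ b + d := by rw [← hordy]; exact orderOf_dvd_of_pow_eq_one hy1
      obtain ⟨t, ht⟩ := hn
      have hbd : (g : ZMod q) ^ (b + d) = 1 := by rw [ht, pow_mul, hγn, one_pow]
      rw [pow_add] at hbd
      linear_combination (1 - (g : ZMod q) ^ d) * h2 - (c : ZMod q) * hbd
  refine ⟨main, fun heq => ?_⟩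
  have hkz : (k : ZMod q) ≠ 0 := by
    rwa [Ne, ZMod.natCast_eq_zero_iff]
  have hgd : (g : ZMod q) ^ d = 1 := by
    have h : x ^ ((g ^ d * k : ℕ) : ℤ) = x ^ ((k : ℕ) : ℤ) := by
      rw [zpow_natCast, zpow_natCast, ← main, heq]
    rw [hxz] at h
    push_cast at h
    have h0 : ((g : ZMod q) ^ d - 1) * (k : ZMod q) = 0 := by linear_combination h
    rcases mul_eq_zero.mp h0 with h' | h'
    · linear_combination h'
    · exact absurd h' hkz
  have hyd : y ^ d = 1 := by
    have hn : n ∣ d := by rw [← hg]; exact orderOf_dvd_of_pow_eq_one hgd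
    rw [← hordy] at hn
    exact orderOf_dvd_iff_pow_eq_one.mp hn
  constructor
  · have h : x ^ a * y ^ b = x ^ ((k : ℤ) - c) := by
      have h' : x ^ a * y ^ b * x ^ c = x ^ k := by
        rw [← h12, hyd]; group
      rw [zpow_sub, zpow_natCast, zpow_natCast, ← h']
      group
    rw [h]
    exact ⟨(k : ℤ) - c, rfl⟩
  · rw [hyd, mul_one]
    exact ⟨(c : ℤ), by simp⟩
end

section
/- Let G = <x, y | x^q = y^n = 1, x^g y = y x> with q prime and ord_q(g) = n, and H = <x>. Let T_1,...,T_k be nonempty sequences over G with Pi(T_i) contained in H for all i and sum_{i=1}^k |Pi(T_i)| >= q. Then the concatenation T_1 T_2 ... T_k contains a nonempty product-one subsequence. -/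
/-!
All product sets `Π(Tᵢ)` live in `H = ⟨x⟩`, a group of prime order `q`. If no `Π(Tᵢ)`
contains `1`, Cauchy–Davenport applied to `Π(T₁) · ({1} ∪ Π(T₂)) ⋯ ({1} ∪ Π(T_k))` gives a set
of size at least `min(q, ∑ |Π(Tᵢ)|) = q`, hence all of `H`. Writing `1` as such a product picks
out `T₁` together with the blocks whose factor is taken from `Π(Tᵢ)`, and their concatenation is
product-one.
-/

open List Subgroup

open scoped Pointwise

section PiSet

variable {G : Type*} [Group G]

lemma prod_mem_piSet (S : List G) : S.prod ∈ PiSet S := ⟨S, List.Perm.refl S, rfl⟩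

lemma mul_mem_piSet_append {S U : List G} {a b : G} (ha : a ∈ PiSet S) (hb : b ∈ PiSet U) :
    a * b ∈ PiSet (S ++ U) := by
  obtain ⟨l, hl, rfl⟩ := ha
  obtain ⟨m, hm, rfl⟩ := hb
  exact ⟨l ++ m, hl.append hm, List.prod_append⟩

end PiSet

lemma le_minOrder_of_natCard_eq_prime {α : Type*} [Group α] {p : ℕ} (hp : p.Prime)
    (hcard : Nat.card α = p) : (p : ℕ∞) ≤ Monoid.minOrder α := by
  refine Monoid.le_minOrder.2 fun a ha _ => ?_
  have hdvd : orderOf a ∣ p := hcard ▸ orderOf_dvd_natCard a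
  rcases hp.eq_one_or_self_of_dvd _ hdvd with h | h
  · exact absurd (orderOf_eq_one_iff.1 h) ha
  · rw [h]

section CauchyDavenport

variable {α : Type*} [Group α] [DecidableEq α]

lemma min_le_card_mul_of_le_minOrder {p : ℕ} (hp : (p : ℕ∞) ≤ Monoid.minOrder α)
    {s t : Finset α} (hs : s.Nonempty) (ht : t.Nonempty) :
    min p (s.card + t.card - 1) ≤ (s * t).card := by
  have h := (min_le_min_right _ hp).trans (cauchy_davenport_minOrder_mul hs ht)
  rwa [← ENat.natCast_le_natCast, Nat.mono_cast.map_min]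

lemma min_le_card_list_prod_of_le_minOrder {p : ℕ} (hp : (p : ℕ∞) ≤ Monoid.minOrder α)
    (L : List (Finset α)) (hL : ∀ s ∈ L, s.Nonempty) :
    min p ((L.map fun s => s.card - 1).sum + 1) ≤ L.prod.card := by
  induction L with
  | nil => simp
  | cons s L ih =>
    have hs := hL s List.mem_cons_self
    have hL' : ∀ t ∈ L, t.Nonempty := fun t ht => hL t (List.mem_cons_of_mem s ht)
    have hprod : L.prod.Nonempty :=
      List.prod_induction _ (fun _ _ => Finset.Nonempty.mul) Finset.one_nonempty hL'
    have hmul := min_le_card_mul_of_le_minOrder hp hs hprod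
    have ih := ih hL'
    have hs1 := hs.card_pos
    simp only [List.map_cons, List.sum_cons, List.prod_cons]
    omega

end CauchyDavenport

section Subgroup

variable {G : Type*} [Group G] {K : Subgroup G} [Finite K]

variable (K) in
noncomputable def piFinset (S : List G) : Finset K :=
  (Set.toFinite {k : K | (k : G) ∈ PiSet S}).toFinset

lemma mem_piFinset {S : List G} {k : K} : k ∈ piFinset K S ↔ (k : G) ∈ PiSet S :=
  Set.Finite.mem_toFinset _

lemma piFinset_nonempty {S : List G} (h : PiSet S ⊆ K) : (piFinset K S).Nonempty :=
  ⟨⟨S.prod, h (prod_mem_piSet S)⟩, mem_piFinset.2 (prod_mem_piSet S)⟩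

lemma card_piFinset {S : List G} (h : PiSet S ⊆ K) : (piFinset K S).card = (PiSet S).ncard := by
  rw [piFinset, ← Set.ncard_eq_toFinset_card]
  exact Set.ncard_preimage_of_injective_subset_range Subtype.val_injective (by simpa using h)

variable [DecidableEq G]

lemma card_insert_one_piFinset {S : List G} (h : PiSet S ⊆ K) (h1 : ¬ IsProdOne S) :
    (insert 1 (piFinset K S)).card = (PiSet S).ncard + 1 := by
  have h1' : (1 : K) ∉ piFinset K S := fun h' =>
    h1 (mem_piFinset.1 h' : ((1 : K) : G) ∈ PiSet S)
  rw [Finset.card_insert_of_notMem h1', card_piFinset h]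

-- The factor `insert 1 (piFinset K T)` records the choice between skipping `T` and using it.
lemma exists_sublist_of_mem_prod_insert_one (Ts : List (List G)) {k : K}
    (hk : k ∈ (Ts.map fun T => insert 1 (piFinset K T)).prod) :
    ∃ Ts' : List (List G), Ts'.Sublist Ts ∧ (k : G) ∈ PiSet Ts'.flatten := by
  induction Ts generalizing k with
  | nil =>
    obtain rfl : k = 1 := by simpa using hk
    exact ⟨[], List.Sublist.slnil, prod_mem_piSet []⟩
  | cons T Ts ih =>
    simp only [List.map_cons, List.prod_cons] at hk
    obtain ⟨a, ha, b, hb, rfl⟩ := Finset.mem_mul.1 hk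
    obtain ⟨Ts', hsub, hb'⟩ := ih hb
    rcases Finset.mem_insert.1 ha with rfl | ha
    · exact ⟨Ts', hsub.cons T, by simpa using hb'⟩
    · refine ⟨T :: Ts', hsub.cons_cons T, ?_⟩
      simpa using mul_mem_piSet_append (mem_piFinset.1 ha) hb'

theorem exists_sublist_one_mem_piSet_append {p : ℕ} (hp : p.Prime) (hK : Nat.card K = p)
    (T : List G) (Ts : List (List G)) (hsub : ∀ U ∈ T :: Ts, PiSet U ⊆ K)
    (h1 : ∀ U ∈ Ts, ¬ IsProdOne U)
    (hsum : p ≤ ((T :: Ts).map fun U => (PiSet U).ncard).sum) :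
    ∃ Ts' : List (List G), Ts'.Sublist Ts ∧ (1 : G) ∈ PiSet (T ++ Ts'.flatten) := by
  set L := piFinset K T :: Ts.map fun U => insert 1 (piFinset K U) with hL
  have hne : ∀ s ∈ L, s.Nonempty := by
    simp only [hL, List.mem_cons, List.mem_map]
    rintro s (rfl | ⟨U, -, rfl⟩)
    · exact piFinset_nonempty (hsub T List.mem_cons_self)
    · exact Finset.insert_nonempty _ _
  have hsumL :
      (L.map fun s => s.card - 1).sum + 1 = ((T :: Ts).map fun U => (PiSet U).ncard).sum := by
    have hT := hsub T List.mem_cons_self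
    have hTpos := (piFinset_nonempty hT).card_pos
    have hTs : (Ts.map fun U => (insert 1 (piFinset K U)).card - 1) =
        Ts.map fun U => (PiSet U).ncard := List.map_congr_left fun U hU => by
      rw [card_insert_one_piFinset (hsub U (List.mem_cons_of_mem T hU)) (h1 U hU),
        Nat.add_sub_cancel]
    simp only [hL, List.map_cons, List.map_map, List.sum_cons, Function.comp_def, hTs]
    rw [card_piFinset hT] at hTpos ⊢
    omega
  have hcard := min_le_card_list_prod_of_le_minOrder (le_minOrder_of_natCard_eq_prime hp hK) L hne
  have h1L : (1 : K) ∈ L.prod := by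
    have := Fintype.ofFinite K
    rw [Finset.eq_univ_of_card L.prod (le_antisymm (Finset.card_le_univ _) ?_)]
    · exact Finset.mem_univ 1
    · rw [← Nat.card_eq_fintype_card, hK]
      omega
  obtain ⟨a, ha, b, hb, hab⟩ := Finset.mem_mul.1 (by simpa only [hL, List.prod_cons] using h1L)
  obtain ⟨Ts', hTs', hb'⟩ := exists_sublist_of_mem_prod_insert_one Ts hb
  refine ⟨Ts', hTs', ?_⟩
  have hab' := mul_mem_piSet_append (mem_piFinset.1 ha) hb'
  rwa [← Subgroup.coe_mul, hab, Subgroup.coe_one] at hab'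

end Subgroup

theorem concat_has_product_one_general (q : ℕ) (hq : q.Prime)
    (G : Type*) [Group G] (x : G)
    (hordx : orderOf x = q)
    (Ts : List (List G))
    (hH : ∀ T ∈ Ts, T ≠ [] ∧ PiSet T ⊆ (Subgroup.zpowers x : Set G))
    (hsum : q ≤ (Ts.map fun T => (PiSet T).ncard).sum) :
    ∃ T' : List G, T' ≠ [] ∧ T'.Sublist Ts.flatten ∧ IsProdOne T' := by
  classical
  by_cases hone : ∃ T ∈ Ts, IsProdOne T
  · obtain ⟨T, hT, h1⟩ := hone
    exact ⟨T, (hH T hT).1, List.sublist_flatten_of_mem hT, h1⟩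
  push Not at hone
  obtain ⟨T, rest, rfl⟩ : ∃ T rest, Ts = T :: rest := by
    cases Ts with
    | nil => exact absurd (Nat.le_zero.1 hsum) hq.ne_zero
    | cons T rest => exact ⟨T, rest, rfl⟩
  have hK : Nat.card (zpowers x) = q := (Nat.card_zpowers x).trans hordx
  have : Finite (zpowers x) := Nat.finite_of_card_ne_zero (hK ▸ hq.ne_zero)
  obtain ⟨Ts', hsub, h1⟩ := exists_sublist_one_mem_piSet_append hq hK T rest
    (fun U hU => (hH U hU).2) (fun U hU => hone U (List.mem_cons_of_mem T hU)) hsum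
  have hT : T ≠ [] := (hH T List.mem_cons_self).1
  refine ⟨T ++ Ts'.flatten, List.append_ne_nil_of_left_ne_nil hT _, ?_, h1⟩
  simpa using hsub.flatten.append_left T

/-- In `G = Z_n ⋉ Z_q` with `H = ⟨x⟩`: if `T₁, …, T_k` are nonempty sequences with
`Π(T_i) ⊆ H` and `∑ |Π(T_i)| ≥ q`, then the concatenation `T₁ ⋯ T_k` contains a
nonempty product-one subsequence. -/
theorem concat_has_product_one (q n g : ℕ) (hq : q.Prime)
    (hg : orderOf (g : ZMod q) = n)
    (G : Type*) [Group G] [Finite G] (x y : G)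
    (hordx : orderOf x = q) (hordy : orderOf y = n)
    (hrel : x ^ g * y = y * x)
    (hgen : Subgroup.closure ({x, y} : Set G) = ⊤)
    (Ts : List (List G)) (hTs : Ts ≠ [])
    (hH : ∀ T ∈ Ts, T ≠ [] ∧ PiSet T ⊆ (Subgroup.zpowers x : Set G))
    (hsum : q ≤ (Ts.map fun T => (PiSet T).ncard).sum) :
    ∃ T' : List G, T' ≠ [] ∧ T'.Sublist Ts.flatten ∧ IsProdOne T' :=
  concat_has_product_one_general q hq G x hordx Ts hH hsum
end

section
/- Let q be a prime, a_1, a_2, a_3 three distinct elements of Z_q, and u an integer. Let A = { a_{sigma(1)} + u a_{sigma(2)} + u^2 a_{sigma(3)} : sigma in S_3 }. (a) If the multiplicative order of u modulo q is greater than 3, then |A| >= 4. (b) If the order of u modulo q equals 3, then 0 is in A or |A| = 6. -/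
/-- The set `{a_{σ(1)} + u a_{σ(2)} + u² a_{σ(3)} : σ ∈ S₃}`. -/
def symSet {q : ℕ} (a : Fin 3 → ZMod q) (u : ZMod q) : Set (ZMod q) :=
  {z | ∃ σ : Equiv.Perm (Fin 3), a (σ 0) + u * a (σ 1) + u ^ 2 * a (σ 2) = z}

section Helpers

variable {F : Type*} [Field F]

private lemma neq_of_factor {e d A B : F} (he : e ≠ 0) (hd : d ≠ 0) (h : A - B = e * d) :
    A ≠ B := by
  intro hAB
  apply hd
  have h0 : e * d = 0 := by rw [← h, hAB, sub_self]
  exact (mul_eq_zero.mp h0).resolve_left he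

private lemma zero_of_cycle_eq {u p q r : F} (hu1 : u ≠ 1) (hc : u ^ 2 + u + 1 = 0)
    (h : p + u * q + u ^ 2 * r = q + u * r + u ^ 2 * p) :
    p + u * q + u ^ 2 * r = 0 := by
  have h5 : (u - 1) * (p + u * q + u ^ 2 * r) = 0 := by
    linear_combination u * h + ((u - 1) * p) * hc
  rcases mul_eq_zero.mp h5 with h6 | h6
  · exact absurd (sub_eq_zero.mp h6) hu1
  · exact h6

private lemma eq_of_all_cycle_eq {u p q r : F} (hu1 : u ≠ 1) (hc : u ^ 2 + u + 1 ≠ 0)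
    (h1 : p + u * q + u ^ 2 * r = q + u * r + u ^ 2 * p)
    (h2 : q + u * r + u ^ 2 * p = r + u * p + u ^ 2 * q) : p = q := by
  have key : (1 - u) ^ 2 * (u ^ 2 + u + 1) * (p - q) = 0 := by
    linear_combination (1 - u) * h1 + (u ^ 2 - u) * h2
  rcases mul_eq_zero.mp key with h6 | h6
  · rcases mul_eq_zero.mp h6 with h7 | h7
    · exact absurd (sub_eq_zero.mp (pow_eq_zero_iff (n := 2) (by norm_num) |>.mp h7)).symm hu1
    · exact absurd h7 hc
  · exact sub_eq_zero.mp h6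

private lemma four_le_ncard {α : Type*} {S : Set α} {b1 b2 c1 c2 : α} (hfin : S.Finite)
    (m1 : b1 ∈ S) (m2 : b2 ∈ S) (m3 : c1 ∈ S) (m4 : c2 ∈ S)
    (h12 : b1 ≠ b2) (h13 : b1 ≠ c1) (h14 : b1 ≠ c2)
    (h23 : b2 ≠ c1) (h24 : b2 ≠ c2) (h34 : c1 ≠ c2) : 4 ≤ S.ncard := by
  have hsub : ({b1, b2, c1, c2} : Set α) ⊆ S := by
    intro w hw
    rcases hw with rfl | rfl | rfl | rfl <;> assumption
  have e4 : ({b1, b2, c1, c2} : Set α).ncard = 4 := by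
    rw [Set.ncard_insert_of_notMem (by simp [h12, h13, h14])
          (((Set.finite_singleton c2).insert c1).insert b2),
        Set.ncard_insert_of_notMem (by simp [h23, h24]) ((Set.finite_singleton c2).insert c1),
        Set.ncard_insert_of_notMem (by simp [h34]) (Set.finite_singleton c2),
        Set.ncard_singleton]
  calc 4 = ({b1, b2, c1, c2} : Set α).ncard := e4.symm
    _ ≤ S.ncard := Set.ncard_le_ncard hsub hfin

private lemma ncard_eq_six {α : Type*} {v1 v2 v3 v4 v5 v6 : α}
    (h12 : v1 ≠ v2) (h13 : v1 ≠ v3) (h14 : v1 ≠ v4) (h15 : v1 ≠ v5) (h16 : v1 ≠ v6)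
    (h23 : v2 ≠ v3) (h24 : v2 ≠ v4) (h25 : v2 ≠ v5) (h26 : v2 ≠ v6)
    (h34 : v3 ≠ v4) (h35 : v3 ≠ v5) (h36 : v3 ≠ v6)
    (h45 : v4 ≠ v5) (h46 : v4 ≠ v6) (h56 : v5 ≠ v6) :
    ({v1, v2, v3, v4, v5, v6} : Set α).ncard = 6 := by
  rw [Set.ncard_insert_of_notMem (by simp [h12, h13, h14, h15, h16])
        (((((Set.finite_singleton v6).insert v5).insert v4).insert v3).insert v2),
      Set.ncard_insert_of_notMem (by simp [h23, h24, h25, h26])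
        ((((Set.finite_singleton v6).insert v5).insert v4).insert v3),
      Set.ncard_insert_of_notMem (by simp [h34, h35, h36])
        (((Set.finite_singleton v6).insert v5).insert v4),
      Set.ncard_insert_of_notMem (by simp [h45, h46]) ((Set.finite_singleton v6).insert v5),
      Set.ncard_insert_of_notMem (by simp [h56]) (Set.finite_singleton v6),
      Set.ncard_singleton]

end Helpers

/-- For distinct `a₁, a₂, a₃ ∈ Z_q` (q prime) and `u ≠ 0`:
(a) if `ord_q(u) > 3` then `|A| ≥ 4`; (b) if `ord_q(u) = 3` then `0 ∈ A` or `|A| = 6`. -/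
theorem three_distinct_elements (q : ℕ) [Fact q.Prime] (a : Fin 3 → ZMod q)
    (ha : Function.Injective a) (u : ZMod q) (hu : u ≠ 0) :
    (3 < orderOf u → 4 ≤ (symSet a u).ncard) ∧
      (orderOf u = 3 → (0 : ZMod q) ∈ symSet a u ∨ (symSet a u).ncard = 6) := by
  haveI : NeZero q := ⟨(Fact.out : q.Prime).ne_zero⟩
  have hxy : a 0 ≠ a 1 := fun h => absurd (ha h) (by decide)
  have hyz : a 1 ≠ a 2 := fun h => absurd (ha h) (by decide)
  have hxz : a 0 ≠ a 2 := fun h => absurd (ha h) (by decide)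
  -- the six values
  set V1 := a 0 + u * a 1 + u ^ 2 * a 2 with hV1
  set V2 := a 0 + u * a 2 + u ^ 2 * a 1 with hV2
  set V3 := a 1 + u * a 0 + u ^ 2 * a 2 with hV3
  set V4 := a 1 + u * a 2 + u ^ 2 * a 0 with hV4
  set V5 := a 2 + u * a 0 + u ^ 2 * a 1 with hV5
  set V6 := a 2 + u * a 1 + u ^ 2 * a 0 with hV6
  -- memberships
  have m1 : V1 ∈ symSet a u := ⟨1, rfl⟩
  have m2 : V2 ∈ symSet a u := by
    refine ⟨Equiv.swap 1 2, ?_⟩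
    rw [show (Equiv.swap (1:Fin 3) 2) 0 = 0 by decide, show (Equiv.swap (1:Fin 3) 2) 1 = 2 by decide,
      show (Equiv.swap (1:Fin 3) 2) 2 = 1 by decide]
  have m3 : V3 ∈ symSet a u := by
    refine ⟨Equiv.swap 0 1, ?_⟩
    rw [show (Equiv.swap (0:Fin 3) 1) 0 = 1 by decide, show (Equiv.swap (0:Fin 3) 1) 1 = 0 by decide,
      show (Equiv.swap (0:Fin 3) 1) 2 = 2 by decide]
  have m4 : V4 ∈ symSet a u := by
    refine ⟨Equiv.swap 0 1 * Equiv.swap 1 2, ?_⟩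
    rw [show (Equiv.swap (0:Fin 3) 1 * Equiv.swap 1 2 : Equiv.Perm (Fin 3)) 0 = 1 by decide,
      show (Equiv.swap (0:Fin 3) 1 * Equiv.swap 1 2 : Equiv.Perm (Fin 3)) 1 = 2 by decide,
      show (Equiv.swap (0:Fin 3) 1 * Equiv.swap 1 2 : Equiv.Perm (Fin 3)) 2 = 0 by decide]
  have m5 : V5 ∈ symSet a u := by
    refine ⟨Equiv.swap 1 2 * Equiv.swap 0 1, ?_⟩
    rw [show (Equiv.swap (1:Fin 3) 2 * Equiv.swap 0 1 : Equiv.Perm (Fin 3)) 0 = 2 by decide,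
      show (Equiv.swap (1:Fin 3) 2 * Equiv.swap 0 1 : Equiv.Perm (Fin 3)) 1 = 0 by decide,
      show (Equiv.swap (1:Fin 3) 2 * Equiv.swap 0 1 : Equiv.Perm (Fin 3)) 2 = 1 by decide]
  have m6 : V6 ∈ symSet a u := by
    refine ⟨Equiv.swap 0 2, ?_⟩
    rw [show (Equiv.swap (0:Fin 3) 2) 0 = 2 by decide, show (Equiv.swap (0:Fin 3) 2) 1 = 1 by decide,
      show (Equiv.swap (0:Fin 3) 2) 2 = 0 by decide]
  -- the set is exactly these six values
  have henum : ∀ σ : Equiv.Perm (Fin 3),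
      (σ 0 = 0 ∧ σ 1 = 1 ∧ σ 2 = 2) ∨ (σ 0 = 0 ∧ σ 1 = 2 ∧ σ 2 = 1) ∨
      (σ 0 = 1 ∧ σ 1 = 0 ∧ σ 2 = 2) ∨ (σ 0 = 1 ∧ σ 1 = 2 ∧ σ 2 = 0) ∨
      (σ 0 = 2 ∧ σ 1 = 0 ∧ σ 2 = 1) ∨ (σ 0 = 2 ∧ σ 1 = 1 ∧ σ 2 = 0) := by decide
  have hS : symSet a u = {V1, V2, V3, V4, V5, V6} := by
    ext w
    constructor
    · rintro ⟨σ, rfl⟩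
      rcases henum σ with ⟨h0, h1, h2⟩ | ⟨h0, h1, h2⟩ | ⟨h0, h1, h2⟩ | ⟨h0, h1, h2⟩ |
        ⟨h0, h1, h2⟩ | ⟨h0, h1, h2⟩ <;> rw [h0, h1, h2] <;>
        simp [hV1, hV2, hV3, hV4, hV5, hV6, Set.mem_insert_iff]
    · intro hw
      rcases hw with rfl | rfl | rfl | rfl | rfl | rfl
      exacts [m1, m2, m3, m4, m5, m6]
  have hfin : (symSet a u).Finite := Set.toFinite _
  constructor
  · -- part (a)
    intro hord
    have h1 : u ≠ 1 := by
      intro h; rw [h, orderOf_one] at hord; omega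
    have h2 : u ^ 2 ≠ 1 := by
      intro h
      have := Nat.le_of_dvd (by norm_num) (orderOf_dvd_of_pow_eq_one h)
      omega
    have h3 : u ^ 3 ≠ 1 := by
      intro h
      have := Nat.le_of_dvd (by norm_num) (orderOf_dvd_of_pow_eq_one h)
      omega
    have hc : u ^ 2 + u + 1 ≠ 0 := by
      intro h; exact h3 (by linear_combination (u - 1) * h)
    have h1u : (1 : ZMod q) - u ≠ 0 := sub_ne_zero.mpr (Ne.symm h1)
    have h1pu : (1 : ZMod q) + u ≠ 0 := by
      intro h; exact h2 (by linear_combination (u - 1) * h)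
    have hdxy : a 0 - a 1 ≠ 0 := sub_ne_zero.mpr hxy
    have hdyz : a 1 - a 2 ≠ 0 := sub_ne_zero.mpr hyz
    have hdxz : a 0 - a 2 ≠ 0 := sub_ne_zero.mpr hxz
    have hdyx : a 1 - a 0 ≠ 0 := sub_ne_zero.mpr hxy.symm
    have hdzy : a 2 - a 1 ≠ 0 := sub_ne_zero.mpr hyz.symm
    have hdzx : a 2 - a 0 ≠ 0 := sub_ne_zero.mpr hxz.symm
    -- the 9 cross-coset inequalities
    have n12 : V1 ≠ V2 := neq_of_factor (mul_ne_zero hu h1u) hdyz (by ring)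
    have n13 : V1 ≠ V3 := neq_of_factor h1u hdxy (by ring)
    have n16 : V1 ≠ V6 := neq_of_factor (mul_ne_zero h1u h1pu) hdxz (by ring)
    have n42 : V4 ≠ V2 := neq_of_factor (mul_ne_zero h1u h1pu) hdyx (by ring)
    have n43 : V4 ≠ V3 := neq_of_factor (mul_ne_zero hu h1u) hdzx (by ring)
    have n46 : V4 ≠ V6 := neq_of_factor h1u hdyz (by ring)
    have n52 : V5 ≠ V2 := neq_of_factor h1u hdzx (by ring)
    have n53 : V5 ≠ V3 := neq_of_factor (mul_ne_zero h1u h1pu) hdzy (by ring)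
    have n56 : V5 ≠ V6 := neq_of_factor (mul_ne_zero hu h1u) hdxy (by ring)
    -- choose two distinct elements from each coset
    by_cases e1 : V1 = V4
    · have n15 : V1 ≠ V5 := by
        intro h
        exact hxy (eq_of_all_cycle_eq h1 hc e1 (e1.symm.trans h))
      by_cases e4 : V2 = V3
      · have n26 : V2 ≠ V6 := by
          intro h
          exact hxz (eq_of_all_cycle_eq h1 hc h (h.symm.trans e4))
        exact four_le_ncard hfin m1 m5 m2 m6 n15 n12 n16 n52 n56 n26
      · exact four_le_ncard hfin m1 m5 m2 m3 n15 n12 n13 n52 n53 (Ne.symm e4 ∘ Eq.symm)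
    · by_cases e4 : V2 = V3
      · have n26 : V2 ≠ V6 := by
          intro h
          exact hxz (eq_of_all_cycle_eq h1 hc h (h.symm.trans e4))
        exact four_le_ncard hfin m1 m4 m2 m6 e1 n12 n16 n42 n46 n26
      · exact four_le_ncard hfin m1 m4 m2 m3 e1 n12 n13 n42 n43 (Ne.symm e4 ∘ Eq.symm)
  · -- part (b)
    intro hord
    have h1 : u ≠ 1 := by
      intro h; rw [h, orderOf_one] at hord; omega
    have h2 : u ^ 2 ≠ 1 := by
      intro h
      have := Nat.le_of_dvd (by norm_num) (orderOf_dvd_of_pow_eq_one h)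
      omega
    have hc : u ^ 2 + u + 1 = 0 := by
      have h3 : u ^ 3 = 1 := by rw [← hord]; exact pow_orderOf_eq_one u
      have h4 : (u - 1) * (u ^ 2 + u + 1) = 0 := by linear_combination h3
      exact (mul_eq_zero.mp h4).resolve_left (sub_ne_zero.mpr h1)
    by_cases e1 : V1 = V4
    · exact Or.inl ((zero_of_cycle_eq h1 hc e1) ▸ m1)
    by_cases e2 : V4 = V5
    · exact Or.inl ((zero_of_cycle_eq h1 hc e2) ▸ m4)
    by_cases e3 : V5 = V1
    · exact Or.inl ((zero_of_cycle_eq h1 hc e3) ▸ m5)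
    by_cases e4 : V2 = V6
    · exact Or.inl ((zero_of_cycle_eq h1 hc e4) ▸ m2)
    by_cases e5 : V6 = V3
    · exact Or.inl ((zero_of_cycle_eq h1 hc e5) ▸ m6)
    by_cases e6 : V3 = V2
    · exact Or.inl ((zero_of_cycle_eq h1 hc e6) ▸ m3)
    right
    have h1u : (1 : ZMod q) - u ≠ 0 := sub_ne_zero.mpr (Ne.symm h1)
    have h1pu : (1 : ZMod q) + u ≠ 0 := by
      intro h; exact h2 (by linear_combination (u - 1) * h)
    have hdxy : a 0 - a 1 ≠ 0 := sub_ne_zero.mpr hxy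
    have hdyz : a 1 - a 2 ≠ 0 := sub_ne_zero.mpr hyz
    have hdxz : a 0 - a 2 ≠ 0 := sub_ne_zero.mpr hxz
    have hdyx : a 1 - a 0 ≠ 0 := sub_ne_zero.mpr hxy.symm
    have hdzy : a 2 - a 1 ≠ 0 := sub_ne_zero.mpr hyz.symm
    have hdzx : a 2 - a 0 ≠ 0 := sub_ne_zero.mpr hxz.symm
    have n12 : V1 ≠ V2 := neq_of_factor (mul_ne_zero hu h1u) hdyz (by ring)
    have n13 : V1 ≠ V3 := neq_of_factor h1u hdxy (by ring)
    have n16 : V1 ≠ V6 := neq_of_factor (mul_ne_zero h1u h1pu) hdxz (by ring)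
    have n42 : V4 ≠ V2 := neq_of_factor (mul_ne_zero h1u h1pu) hdyx (by ring)
    have n43 : V4 ≠ V3 := neq_of_factor (mul_ne_zero hu h1u) hdzx (by ring)
    have n46 : V4 ≠ V6 := neq_of_factor h1u hdyz (by ring)
    have n52 : V5 ≠ V2 := neq_of_factor h1u hdzx (by ring)
    have n53 : V5 ≠ V3 := neq_of_factor (mul_ne_zero h1u h1pu) hdzy (by ring)
    have n56 : V5 ≠ V6 := neq_of_factor (mul_ne_zero hu h1u) hdxy (by ring)
    rw [hS]
    exact ncard_eq_six n12 n13 e1 (fun h => e3 h.symm) n16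
      (fun h => e6 h.symm) n42.symm n52.symm e4
      n43.symm n53.symm (fun h => e5 h.symm) e2 n46 n56
end

section
/- Let q be a prime, A a subset of Z_q, and a, u elements of Z_q with 1 < |A| < ord_q(u). Let c be a positive integer. Define A_1 = { a + u b : b in A } and A_2 = { b + u^c a : b in A }. Then |A_1 union A_2| >= |A| + 1. -/
/-- Inductive lemma: for `A ⊆ Z_q` (q prime), `a, u ∈ Z_q` with `1 < |A| < ord_q(u)`,
and `c ≥ 1`, the sets `A₁ = {a + u b : b ∈ A}` and `A₂ = {b + u^c a : b ∈ A}` satisfy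
`|A₁ ∪ A₂| ≥ |A| + 1`. -/
theorem inductive_lemma (q : ℕ) [Fact q.Prime] (A : Set (ZMod q)) (a u : ZMod q)
    (hu : u ≠ 0) (hA1 : 1 < A.ncard) (hA2 : A.ncard < orderOf u)
    (c : ℕ) (hc : 0 < c) :
    A.ncard + 1 ≤ (((fun b => a + u * b) '' A) ∪ ((fun b => b + u ^ c * a) '' A)).ncard := by
  have hq := Fact.out (p := q.Prime)
  haveI : NeZero q := ⟨hq.ne_zero⟩
  have hAfin : A.Finite := Set.toFinite A
  have hu1 : u ≠ 1 := by
    intro h; subst h; simp at hA2; omega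
  have hinj1 : Function.Injective (fun b : ZMod q => a + u * b) := by
    intro x y h
    simp only at h
    exact mul_left_cancel₀ hu (add_left_cancel h)
  have hinj2 : Function.Injective (fun b : ZMod q => b + u ^ c * a) := by
    intro x y h
    simpa using h
  set A₁ := (fun b : ZMod q => a + u * b) '' A with hA₁def
  set A₂ := (fun b : ZMod q => b + u ^ c * a) '' A with hA₂def
  have hc1 : A₁.ncard = A.ncard := Set.ncard_image_of_injective A hinj1
  have hc2 : A₂.ncard = A.ncard := Set.ncard_image_of_injective A hinj2
  by_contra hcon
  push_neg at hcon
  have hUfin : (A₁ ∪ A₂).Finite := Set.toFinite _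
  have hcard : (A₁ ∪ A₂).ncard ≤ A.ncard := by omega
  have hEq1 : A₁ = A₁ ∪ A₂ :=
    Set.eq_of_subset_of_ncard_le Set.subset_union_left (by omega) hUfin
  have hEq2 : A₂ = A₁ ∪ A₂ :=
    Set.eq_of_subset_of_ncard_le Set.subset_union_right (by omega) hUfin
  have hA12 : A₁ = A₂ := hEq1.trans hEq2.symm
  -- the affine map y ↦ u*y - t maps A into A, where t = u^c*a - a
  set t : ZMod q := u ^ c * a - a with ht
  have hg : ∀ y ∈ A, u * y - t ∈ A := by
    intro y hy
    have : a + u * y ∈ A₂ := hA12 ▸ ⟨y, hy, rfl⟩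
    obtain ⟨x, hx, hxe⟩ := this
    have : u * y - t = x := by
      simp only at hxe
      rw [ht]; linear_combination - hxe
    rwa [this]
  -- fixed point
  have hu1' : u - 1 ≠ 0 := sub_ne_zero.mpr hu1
  set x₀ : ZMod q := t * (u - 1)⁻¹ with hx₀
  have hfix : u * x₀ - t = x₀ := by
    have : x₀ * (u - 1) = t := by
      rw [hx₀, mul_assoc, inv_mul_cancel₀ hu1', mul_one]
    linear_combination this
  have hB : ∀ z : ZMod q, z + x₀ ∈ A → u * z + x₀ ∈ A := by
    intro z hz
    have := hg _ hz
    have he : u * z + x₀ = u * (z + x₀) - t := by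
      linear_combination - hfix
    rwa [he]
  have hBk : ∀ k : ℕ, ∀ z : ZMod q, z + x₀ ∈ A → u ^ k * z + x₀ ∈ A := by
    intro k
    induction k with
    | zero => intro z hz; simpa using hz
    | succ n ih =>
      intro z hz
      have := hB _ (ih z hz)
      have he : u ^ (n + 1) * z + x₀ = u * (u ^ n * z) + x₀ := by ring
      rwa [he]
  -- pick y ∈ A with y ≠ x₀
  obtain ⟨y, hy, hyne⟩ : ∃ y ∈ A, y ≠ x₀ := by
    obtain ⟨y, hy, hyne⟩ := Set.exists_ne_of_one_lt_ncard hA1 x₀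
    exact ⟨y, hy, hyne⟩
  set z : ZMod q := y - x₀ with hz
  have hz0 : z ≠ 0 := sub_ne_zero.mpr hyne
  have hzA : z + x₀ ∈ A := by rw [hz]; simpa using hy
  -- the orbit of z under powers of u gives orderOf u distinct elements of A
  set T : Finset (ZMod q) := (Finset.range (orderOf u)).image (fun k => u ^ k * z + x₀) with hT
  have hTsub : ↑T ⊆ A := by
    intro x hx
    simp only [hT, Finset.coe_image, Set.mem_image, Finset.coe_range, Set.mem_Iio] at hx
    obtain ⟨k, _, rfl⟩ := hx
    exact hBk k z hzA
  have hTcard : T.card = orderOf u := by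
    rw [hT, Finset.card_image_of_injOn, Finset.card_range]
    intro i hi j hj hij
    simp only [Finset.coe_range, Set.mem_Iio] at hi hj
    have : u ^ i = u ^ j := by
      have h' : u ^ i * z = u ^ j * z := by
        have := add_right_cancel hij
        exact this
      exact mul_right_cancel₀ hz0 h'
    exact pow_injOn_Iio_orderOf hi hj this
  have : (↑T : Set (ZMod q)).ncard ≤ A.ncard := Set.ncard_le_ncard hTsub hAfin
  rw [Set.ncard_coe_finset, hTcard] at this
  omega
end

section
/- Let 1 -> H -> G -> K -> 1 be a short exact sequence of finite groups. Then d(G) <= (d(H) - 1) f(K) + d(K). Moreover, if d(G) = (d(H) - 1) f(K) + d(K), then f(G) <= f(H) f(K). -/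
open List Subgroup

/-! Greedily cut a sequence over `G` of length `(d(H) - 1) f(K) + d(K)`, with `H = ker φ`, into
`d(H)` disjoint blocks of length at most `f(K)` whose images in `K` are product-one; ordered
suitably, each block has its product in `H`. At most `f(H)` of these `d(H)` products form a
product-one sequence in `H`, and concatenating the corresponding blocks gives a product-one
subsequence of length at most `f(H) f(K)`. -/

namespace List

variable {α β : Type*}

theorem Perm.exists_map_eq {f : α → β} {l₁ : List β} {l₂ : List α} (h : l₁ ~ l₂.map f) :
    ∃ l, l ~ l₂ ∧ l.map f = l₁ := by
  obtain ⟨l, rfl, hl⟩ := (congrFun₂ (eq_map_comp_perm f) l₁ l₂).mpr h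
  exact ⟨l, hl, rfl⟩

theorem Subperm.exists_map_eq {f : α → β} {l₁ : List β} {l₂ : List α} (h : l₁ <+~ l₂.map f) :
    ∃ l, l <+~ l₂ ∧ l.map f = l₁ := by
  obtain ⟨u, hu, hsub⟩ := h
  obtain ⟨A, hA, rfl⟩ := sublist_map_iff.mp hsub
  obtain ⟨l, hl, rfl⟩ := hu.symm.exists_map_eq
  exact ⟨l, hl.subperm.trans hA.subperm, rfl⟩

theorem Subperm.flatten {L₁ L₂ : List (List α)} (h : L₁ <+~ L₂) : L₁.flatten <+~ L₂.flatten := by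
  obtain ⟨L, hL, hsub⟩ := h
  exact hL.flatten.symm.subperm.trans hsub.flatten.subperm

theorem exists_flatten_subperm {P : List α → Prop} {a b : ℕ}
    (hP : ∀ S : List α, a ≤ S.length → ∃ T, T <+~ S ∧ T.length ≤ b ∧ P T) (k : ℕ) {S : List α}
    (hS : a + k * b ≤ S.length) :
    ∃ Ts : List (List α), Ts.length = k + 1 ∧ (∀ T ∈ Ts, T.length ≤ b ∧ P T) ∧
      Ts.flatten <+~ S := by
  classical
  induction k generalizing S with
  | zero =>
    obtain ⟨T, hTS, hT⟩ := hP S (by simpa using hS)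
    exact ⟨[T], rfl, by simpa using hT, by simpa using hTS⟩
  | succ k ih =>
    obtain ⟨T, hTS, hTb, hT⟩ := hP S ((Nat.le_add_right _ _).trans hS)
    have hsplit : T ++ S.diff T ~ S :=
      subperm_append_diff_self_of_count_le (subperm_ext_iff.mp hTS)
    obtain ⟨Ts, hlen, hTs, hflat⟩ := ih (S := S.diff T) <| by
      have := hsplit.length_eq
      rw [length_append] at this
      rw [Nat.succ_mul] at hS
      omega
    refine ⟨T :: Ts, by simp [hlen], forall_mem_cons.mpr ⟨⟨hTb, hT⟩, hTs⟩, ?_⟩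
    rw [flatten_cons]
    exact ((subperm_append_left T).mpr hflat).trans hsplit.subperm

end List

section ProductOne

variable {G : Type*} [Group G]

theorem isProdOne_of_perm {S T : List G} (h : S ~ T) (hT : T.prod = 1) : IsProdOne S :=
  ⟨T, h.symm, hT⟩

theorem exists_sublist_isProdOne_of_subperm {S T : List G} (hT : T ≠ []) (hTS : T <+~ S)
    (hprod : T.prod = 1) : ∃ T', T' ≠ [] ∧ T' <+ S ∧ T'.length = T.length ∧ IsProdOne T' := by
  obtain ⟨T', hT'T, hT'S⟩ := hTS
  refine ⟨T', ?_, hT'S, hT'T.length_eq, isProdOne_of_perm hT'T hprod⟩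
  rintro rfl
  exact hT hT'T.nil_eq.symm

theorem exists_sublist_prod_eq_one_of_card_le [Finite G] {S : List G}
    (h : Nat.card G ≤ S.length) : ∃ T, T ≠ [] ∧ T <+ S ∧ T.prod = 1 := by
  cases nonempty_fintype G
  obtain ⟨i, j, hne, heq⟩ := Fintype.exists_ne_map_eq_of_card_lt
    (fun i : Fin (S.length + 1) => (S.take i).prod)
    (by rw [Fintype.card_fin, ← Nat.card_eq_fintype_card]; omega)
  wlog hij : i < j generalizing i j
  · exact this j i hne.symm heq.symm (lt_of_le_of_ne (not_lt.mp hij) hne.symm)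
  -- the prefix products up to `i` and up to `j` agree, so the infix between them has product one
  refine ⟨(S.take j).drop i, ?_, (drop_sublist _ _).trans (take_sublist _ _), ?_⟩
  · rw [← length_pos_iff, length_drop, length_take]
    omega
  · have hsplit := congrArg List.prod (take_append_drop i (S.take j))
    rw [prod_append, take_take, min_eq_left (Fin.le_iff_val_le_val.mp hij.le)] at hsplit
    exact mul_eq_left.mp (hsplit.trans heq.symm)

theorem dC_mem (G : Type*) [Group G] [Finite G] :
    dC G ∈ {m | 0 < m ∧ ∀ S : List G, S.length = m →
      ∃ T : List G, T ≠ [] ∧ T.Sublist S ∧ IsProdOne T} :=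
  Nat.sInf_mem ⟨Nat.card G, Nat.card_pos, fun _ hS =>
    let ⟨T, hT, hTS, hprod⟩ := exists_sublist_prod_eq_one_of_card_le hS.ge
    ⟨T, hT, hTS, isProdOne_of_perm (Perm.refl T) hprod⟩⟩

theorem dC_pos (G : Type*) [Group G] [Finite G] : 0 < dC G := (dC_mem G).1

theorem fC_mem (G : Type*) [Group G] [Finite G] :
    fC G ∈ {m | 0 < m ∧ ∀ S : List G, S.length = dC G →
      ∃ T : List G, T ≠ [] ∧ T.Sublist S ∧ T.length ≤ m ∧ IsProdOne T} :=
  Nat.sInf_mem ⟨dC G, dC_pos G, fun S hS =>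
    let ⟨T, hT, hTS, hprod⟩ := (dC_mem G).2 S hS
    ⟨T, hT, hTS, hS ▸ hTS.length_le, hprod⟩⟩

theorem fC_pos (G : Type*) [Group G] [Finite G] : 0 < fC G := (fC_mem G).1

theorem exists_subperm_prod_eq_one_of_dC_le [Finite G] {S : List G} (h : dC G ≤ S.length) :
    ∃ T, T ≠ [] ∧ T <+~ S ∧ T.length ≤ fC G ∧ T.prod = 1 := by
  obtain ⟨T, hT, hTS, hTlen, l, hlT, hl⟩ := (fC_mem G).2 (S.take (dC G)) (by simpa using h)
  refine ⟨l, ?_, hlT.subperm.trans (hTS.trans (take_sublist _ _)).subperm,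
    hlT.length_eq ▸ hTlen, hl⟩
  rintro rfl
  exact hT hlT.nil_eq.symm

theorem Subgroup.exists_subperm_prod_eq_one_of_dC_le (H : Subgroup G) [Finite H] {S : List G}
    (hSH : ∀ x ∈ S, x ∈ H) (h : dC H ≤ S.length) :
    ∃ T, T ≠ [] ∧ T <+~ S ∧ T.length ≤ fC H ∧ T.prod = 1 := by
  lift S to List H using hSH
  obtain ⟨T, hT, hTS, hTlen, hprod⟩ := _root_.exists_subperm_prod_eq_one_of_dC_le (by simpa using h)
  refine ⟨T.map (↑), by rwa [Ne, map_eq_nil_iff], hTS.map Subtype.val_injective, by simpa using hTlen, ?_⟩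
  rw [← SubmonoidClass.coe_list_prod, hprod, OneMemClass.coe_one]

end ProductOne

section Extension

variable {G K : Type*} [Group G] [Group K] [Finite K]

theorem exists_subperm_prod_mem_ker_of_dC_le (φ : G →* K) {S : List G} (h : dC K ≤ S.length) :
    ∃ T, T <+~ S ∧ T.length ≤ fC K ∧ T ≠ [] ∧ T.prod ∈ φ.ker := by
  obtain ⟨U, hU, hUS, hUlen, hprod⟩ :=
    exists_subperm_prod_eq_one_of_dC_le (S := S.map φ) (by simpa using h)
  obtain ⟨T, hTS, rfl⟩ := hUS.exists_map_eq
  exact ⟨T, hTS, by simpa using hUlen, by simpa using hU, by rwa [MonoidHom.mem_ker, map_list_prod]⟩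

theorem exists_sublist_isProdOne_of_ker (φ : G →* K) [Finite φ.ker] {S : List G}
    (hS : (dC φ.ker - 1) * fC K + dC K ≤ S.length) :
    ∃ T, T ≠ [] ∧ T <+ S ∧ T.length ≤ fC φ.ker * fC K ∧ IsProdOne T := by
  obtain ⟨Ts, hlen, hTs, hflat⟩ := exists_flatten_subperm
    (fun _ => exists_subperm_prod_mem_ker_of_dC_le φ) (dC φ.ker - 1) (by rwa [add_comm])
  obtain ⟨U, hU, hUTs, hUlen, hprod⟩ := φ.ker.exists_subperm_prod_eq_one_of_dC_le
    (S := Ts.map List.prod) (by simpa using fun T hT => (hTs T hT).2.2)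
    (by rw [length_map, hlen]; have := dC_pos φ.ker; omega)
  obtain ⟨Bs, hBsTs, rfl⟩ := hUTs.exists_map_eq
  have hBs : ∀ T ∈ Bs, T.length ≤ fC K ∧ T ≠ [] ∧ T.prod ∈ φ.ker :=
    fun T hT => hTs T (hBsTs.subset hT)
  have hne : Bs.flatten ≠ [] := by
    obtain ⟨T, hT⟩ := exists_mem_of_ne_nil Bs (by simpa using hU)
    rw [Ne, flatten_eq_nil_iff]
    exact fun h => (hBs T hT).2.1 (h T hT)
  have hlen : Bs.flatten.length ≤ fC φ.ker * fC K := calc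
    Bs.flatten.length = (Bs.map length).sum := length_flatten
    _ ≤ (Bs.map length).length • fC K :=
      sum_le_card_nsmul _ _ (by simpa using fun T hT => (hBs T hT).1)
    _ ≤ fC φ.ker * fC K := by simpa using Nat.mul_le_mul_right _ hUlen
  obtain ⟨T, hT, hTS, hTlen, hTprod⟩ := exists_sublist_isProdOne_of_subperm hne
    (hBsTs.flatten.trans hflat) (by rwa [prod_flatten])
  exact ⟨T, hT, hTS, hTlen ▸ hlen, hTprod⟩

end Extension

theorem extension_bound_general (G K : Type*) [Group G] [Group K] [Finite G] [Finite K]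
    (φ : G →* K) :
    dC G ≤ (dC (↥φ.ker) - 1) * fC K + dC K ∧
      (dC G = (dC (↥φ.ker) - 1) * fC K + dC K → fC G ≤ fC (↥φ.ker) * fC K) := by
  have key (S : List G) (hS : S.length = (dC φ.ker - 1) * fC K + dC K) :=
    exists_sublist_isProdOne_of_ker φ hS.ge
  refine ⟨Nat.sInf_le ⟨by have := dC_pos K; omega, fun S hS => ?_⟩,
    fun heq => Nat.sInf_le ⟨Nat.mul_pos (fC_pos _) (fC_pos K), fun S hS => key S (hS.trans heq)⟩⟩
  obtain ⟨T, hT, hTS, -, hprod⟩ := key S hS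
  exact ⟨T, hT, hTS, hprod⟩

/-- For a short exact sequence `1 → H → G → K → 1` of finite groups,
`d(G) ≤ (d(H) - 1) f(K) + d(K)`, and if equality holds then `f(G) ≤ f(H) f(K)`. -/
theorem extension_bound (G K : Type*) [Group G] [Group K] [Finite G] [Finite K]
    (φ : G →* K) (hφ : Function.Surjective φ) :
    dC G ≤ (dC (↥φ.ker) - 1) * fC K + dC K ∧
      (dC G = (dC (↥φ.ker) - 1) * fC K + dC K → fC G ≤ fC (↥φ.ker) * fC K) :=
  extension_bound_general G K φ
end

section
/- For any finite group G and positive integer k, d_k(G) <= (k - 1) f(G) + d(G). -/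
open List Subgroup

/-! Any `d(G)` terms contain a product-one subsequence of length at most `f(G)`. Removing it
costs at most `f(G)` terms, so `(k - 1) f(G) + d(G)` terms allow `k - 1` such removals and still
leave `d(G)` terms for a `k`-th product-one subsequence. -/

section Davenport

variable {G : Type*} [Group G]

lemma isProdOne_of_prod_eq_one {T : List G} (h : T.prod = 1) : IsProdOne T :=
  ⟨T, List.Perm.refl T, h⟩

lemma exists_prodOne_sublist_of_prod_take_eq (S : List G) {i n : ℕ} (hn : 0 < n)
    (hin : i + n ≤ S.length) (h : (S.take (i + n)).prod = (S.take i).prod) :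
    ∃ T : List G, T ≠ [] ∧ T.Sublist S ∧ IsProdOne T := by
  refine ⟨(S.drop i).take n, ?_, (List.take_sublist _ _).trans (List.drop_sublist _ _), ?_⟩
  · rw [← List.length_pos_iff, List.length_take, List.length_drop]
    omega
  · rw [List.take_add, List.prod_append, mul_eq_left] at h
    exact isProdOne_of_prod_eq_one h

/-- Pigeonhole on the `|G| + 1` prefix products `(S.take i).prod`, `i ≤ |G|`. -/
lemma exists_prodOne_sublist_of_card_le_length [Finite G] (S : List G)
    (hS : Nat.card G ≤ S.length) : ∃ T : List G, T ≠ [] ∧ T.Sublist S ∧ IsProdOne T := by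
  have := Fintype.ofFinite G
  obtain ⟨a, b, hab, heq⟩ := Fintype.exists_ne_map_eq_of_card_lt
    (fun i : Fin (Nat.card G + 1) => (S.take i).prod) (by simp [Nat.card_eq_fintype_card])
  have ha := a.is_lt
  have hb := b.is_lt
  rcases Nat.lt_or_gt_of_ne (Fin.val_ne_of_ne hab) with hlt | hlt
  · exact exists_prodOne_sublist_of_prod_take_eq S (i := a) (n := b - a) (by omega) (by omega)
      (by rw [Nat.add_sub_cancel' hlt.le]; exact heq.symm)
  · exact exists_prodOne_sublist_of_prod_take_eq S (i := b) (n := a - b) (by omega) (by omega)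
      (by rw [Nat.add_sub_cancel' hlt.le]; exact heq)

lemma dC_spec [Finite G] :
    0 < dC G ∧ ∀ S : List G, S.length = dC G →
      ∃ T : List G, T ≠ [] ∧ T.Sublist S ∧ IsProdOne T :=
  Nat.sInf_mem (s := {m | 0 < m ∧ ∀ S : List G, S.length = m →
      ∃ T : List G, T ≠ [] ∧ T.Sublist S ∧ IsProdOne T}) ⟨Nat.card G, Nat.card_pos,
    fun S hS => exists_prodOne_sublist_of_card_le_length S hS.ge⟩

lemma fC_spec [Finite G] (S : List G) (hS : S.length = dC G) :
    ∃ T : List G, T ≠ [] ∧ T.Sublist S ∧ T.length ≤ fC G ∧ IsProdOne T := by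
  refine (Nat.sInf_mem (s := {m | 0 < m ∧ ∀ S : List G, S.length = dC G →
    ∃ T : List G, T ≠ [] ∧ T.Sublist S ∧ T.length ≤ m ∧ IsProdOne T})
    ⟨dC G, dC_spec.1, fun S hS => ?_⟩).2 S hS
  obtain ⟨T, hT, hTS, hT1⟩ := dC_spec.2 S hS
  exact ⟨T, hT, hTS, hS ▸ hTS.length_le, hT1⟩

lemma exists_short_prodOne_le_of_dC_le_card [Finite G] (M : Multiset G)
    (hM : dC G ≤ Multiset.card M) :
    ∃ T : List G, T ≠ [] ∧ IsProdOne T ∧ T.length ≤ fC G ∧ (T : Multiset G) ≤ M := by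
  obtain ⟨T, hT, hTS, hTf, hT1⟩ := fC_spec (M.toList.take (dC G)) (by simpa using hM)
  refine ⟨T, hT, hT1, hTf, ?_⟩
  rw [← Multiset.coe_toList M, Multiset.coe_le]
  exact (hTS.trans (List.take_sublist _ _)).subperm

lemma exists_disjoint_prodOne_of_card_le [Finite G] (n : ℕ) (M : Multiset G)
    (hM : n * fC G + dC G ≤ Multiset.card M) :
    ∃ Ts : List (List G), Ts.length = n + 1 ∧ (∀ T ∈ Ts, T ≠ [] ∧ IsProdOne T) ∧
      (Ts.flatten : Multiset G) ≤ M := by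
  induction n generalizing M with
  | zero =>
    obtain ⟨T, hT, hT1, -, hTM⟩ := exists_short_prodOne_le_of_dC_le_card M (by simpa using hM)
    exact ⟨[T], rfl, by simpa using ⟨hT, hT1⟩, by simpa using hTM⟩
  | succ n ih =>
    obtain ⟨T, hT, hT1, hTf, hTM⟩ :=
      exists_short_prodOne_le_of_dC_le_card M (le_of_add_le_right hM)
    obtain ⟨R, rfl⟩ := Multiset.le_iff_exists_add.mp hTM
    have hR : n * fC G + dC G ≤ Multiset.card R := by
      rw [Multiset.card_add, Multiset.coe_card, add_one_mul] at hM
      omega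
    obtain ⟨Ts, hlen, hTs, hTsR⟩ := ih R hR
    refine ⟨T :: Ts, by simp [hlen], ?_, ?_⟩
    · simpa [hT, hT1] using hTs
    · rw [List.flatten_cons, ← Multiset.coe_add]
      exact add_le_add_right hTsR _

end Davenport

theorem dk_le_general (G : Type*) [Group G] [Finite G] (k : ℕ) :
    dkC G k ≤ (k - 1) * fC G + dC G := by
  refine Nat.sInf_le ⟨by have := (dC_spec (G := G)).1; omega, fun S hS => ?_⟩
  cases k with
  | zero => exact ⟨[], rfl, by simp, by simp⟩
  | succ n =>
    exact exists_disjoint_prodOne_of_card_le n (S : Multiset G) (by simp [hS])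

/-- For any finite group `G` and positive integer `k`, `d_k(G) ≤ (k - 1) f(G) + d(G)`. -/
theorem dk_le (G : Type*) [Group G] [Finite G] (k : ℕ) (hk : 0 < k) :
    dkC G k ≤ (k - 1) * fC G + dC G :=
  dk_le_general G k
end
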